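/- Let F be a filter in a distributive inverse semigroup S. Then F is a prime filter if and only if d(F) = (F⁻¹F)↑ is a prime filter. -/

import Mathlib

namespace InvPaper

/-- An inverse semigroup: a regular semigroup whose idempotents commute
(equivalently, each element has a unique generalized inverse `sinv`). -/
class InverseSemigroup (S : Type*) extends Semigroup S where
  sinv : S → S
  mul_sinv_mul : ∀ a : S, a * sinv a * a = a
  sinv_mul_sinv : ∀ a : S, sinv a * a * sinv a = sinv a
  idem_comm : ∀ e f : S, e * e = e → f * f = f → e * f = f * e

open InverseSemigroup

variable {S : Type*}

section Basic
variable [InverseSemigroup S]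

/-- `e` is an idempotent. -/
def idem (e : S) : Prop := e * e = e

/-- The natural partial order: `a ≤ b` iff `a = b * e` for some idempotent `e`. -/
def nle (a b : S) : Prop := ∃ e : S, idem e ∧ a = b * e

/-- `s` and `t` are compatible: `s⁻¹t` and `st⁻¹` are idempotents. -/
def compatible (s t : S) : Prop := idem (sinv s * t) ∧ idem (s * sinv t)

/-- `j` is the join (least upper bound) of `a` and `b` w.r.t. the natural partial order. -/
def isJoin (a b j : S) : Prop :=
  nle a j ∧ nle b j ∧ ∀ c : S, nle a c → nle b c → nle j c

/-- `m` is the meet (greatest lower bound) of `a` and `b`. -/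
def isMeet (a b m : S) : Prop :=
  nle m a ∧ nle m b ∧ ∀ z : S, nle z a → nle z b → nle z m

/-- `j` is the least upper bound of the set `A`. -/
def isJoinSet (A : Set S) (j : S) : Prop :=
  (∀ a ∈ A, nle a j) ∧ ∀ c : S, (∀ a ∈ A, nle a c) → nle j c

/-- A filter: a nonempty, downward-directed, upward-closed subset. -/
def IsFilter (F : Set S) : Prop :=
  F.Nonempty ∧ (∀ a ∈ F, ∀ b ∈ F, ∃ c ∈ F, nle c a ∧ nle c b) ∧
    ∀ a ∈ F, ∀ b : S, nle a b → b ∈ F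

/-- An order ideal: a downward-closed subset. -/
def IsOrderIdeal (A : Set S) : Prop := ∀ x ∈ A, ∀ y : S, nle y x → y ∈ A

end Basic

/-- An inverse semigroup with a (multiplicative) zero element. -/
class InverseSemigroupWithZero (S : Type*) extends InverseSemigroup S, Zero S where
  zmul : ∀ a : S, 0 * a = 0
  mulz : ∀ a : S, a * 0 = 0

section WithZero
variable [InverseSemigroupWithZero S]

/-- A proper filter: a filter not containing `0`. -/
def IsProperFilter (F : Set S) : Prop := IsFilter F ∧ (0 : S) ∉ F

/-- An ultrafilter: a maximal proper filter. -/
def IsUltrafilter (F : Set S) : Prop :=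
  IsProperFilter F ∧ ∀ G : Set S, IsProperFilter G → F ⊆ G → G = F

/-- A prime filter: a proper filter `F` such that whenever a join `a ∨ b` exists and
lies in `F`, then `a ∈ F` or `b ∈ F`. -/
def IsPrimeFilter (F : Set S) : Prop :=
  IsProperFilter F ∧ ∀ a b j : S, isJoin a b j → j ∈ F → a ∈ F ∨ b ∈ F

/-- `d(F) = (F⁻¹F)↑`, the upward closure of `{a⁻¹b : a, b ∈ F}`. -/
def dClosure (F : Set S) : Set S :=
  {x | ∃ a ∈ F, ∃ b ∈ F, nle (InverseSemigroup.sinv a * b) x}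

/-- `r(F) = (FF⁻¹)↑`, the upward closure of `{ab⁻¹ : a, b ∈ F}`. -/
def rClosure (F : Set S) : Set S :=
  {x | ∃ a ∈ F, ∃ b ∈ F, nle (a * InverseSemigroup.sinv b) x}

/-- The product of two filters: `F · G = (FG)↑`. -/
def filterMul (F G : Set S) : Set S :=
  {x | ∃ a ∈ F, ∃ b ∈ G, nle (a * b) x}

/-- `A` is ∨-closed: closed under existing joins of finite nonempty compatible subsets. -/
def IsVeeClosed (A : Set S) : Prop :=
  ∀ Y : Finset S, Y.Nonempty → ↑Y ⊆ A → (∀ a ∈ Y, ∀ b ∈ Y, compatible a b) →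
    ∀ j : S, isJoinSet (↑Y : Set S) j → j ∈ A

/-- The ∨-closure `A^∨`: all existing joins of finite nonempty compatible subsets of `A`. -/
def veeClosure (A : Set S) : Set S :=
  {x | ∃ Y : Finset S, Y.Nonempty ∧ ↑Y ⊆ A ∧ (∀ a ∈ Y, ∀ b ∈ Y, compatible a b) ∧
    isJoinSet (↑Y : Set S) x}

/-- A prime order ideal: if every common lower bound of `a` and `b` lies in `P`,
then `a ∈ P` or `b ∈ P`. -/
def IsPrimeOrderIdeal (P : Set S) : Prop :=
  ∀ a b : S, (∀ z : S, nle z a → nle z b → z ∈ P) → a ∈ P ∨ b ∈ P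

/-- The set of prime filters containing `s`. -/
def Xset (s : S) : Set (Set S) := {F | IsPrimeFilter F ∧ s ∈ F}

end WithZero

/-- A distributive inverse semigroup: compatible pairs have joins and
multiplication distributes over these joins. -/
class DistributiveInverseSemigroup (S : Type*) extends InverseSemigroupWithZero S where
  joins_exist : ∀ a b : S, compatible a b → ∃ j : S, isJoin a b j
  mul_distrib_left : ∀ a b j c : S, compatible a b → isJoin a b j →
    isJoin (c * a) (c * b) (c * j)
  mul_distrib_right : ∀ a b j c : S, compatible a b → isJoin a b j →
    isJoin (a * c) (b * c) (j * c)

/-- A distributive inverse semigroup is Boolean if its idempotents form a generalized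
Boolean algebra: relative complements of idempotents exist. -/
def IsBoolean (S : Type*) [DistributiveInverseSemigroup S] : Prop :=
  ∀ e f : S, idem e → idem f → nle e f →
    ∃ g : S, idem g ∧ e * g = 0 ∧ isJoin e g f

/-- A pseudogroup: an inverse semigroup with joins of all nonempty compatible subsets,
over which multiplication distributes. -/
class Pseudogroup (S : Type*) extends InverseSemigroup S where
  joins_exist : ∀ A : Set S, A.Nonempty → (∀ a ∈ A, ∀ b ∈ A, compatible a b) →
    ∃ j : S, isJoinSet A j
  mul_distrib_left : ∀ (A : Set S) (j c : S), isJoinSet A j →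
    isJoinSet ((c * ·) '' A) (c * j)
  mul_distrib_right : ∀ (A : Set S) (j c : S), isJoinSet A j →
    isJoinSet ((· * c) '' A) (j * c)

/-!
In a filter `F`, every element `x` of `d(F)` lies above some `c⁻¹c` with `c ∈ F`, and then
`cx ∈ F`. If `F` is prime and `a ∨ b = x`, distributivity gives `ca ∨ cb = cx ∈ F`; say `ca ∈ F`,
then `c⁻¹(ca) ≤ a` puts `a` in `d(F)`. Conversely, if `a ∨ b = j ∈ F` then
`a⁻¹a ∨ b⁻¹b = j⁻¹j ∈ d(F)`. If `d(F)` is prime, say `a⁻¹a ∈ d(F)`, then some `d ∈ F` below `j`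
has `d⁻¹d ≤ a⁻¹a`; as `a` and `d` are both restrictions of `j`, this means `d ≤ a`, so `a ∈ F`.
-/

section InverseSemigroup
variable [InverseSemigroup S]

lemma idem_comm' {e f : S} (he : idem e) (hf : idem f) : e * f = f * e :=
  idem_comm e f he hf

lemma idem_sinv_mul_self (a : S) : idem (sinv a * a) := by
  show sinv a * a * (sinv a * a) = sinv a * a
  rw [← mul_assoc, sinv_mul_sinv]

lemma idem_mul_sinv_self (a : S) : idem (a * sinv a) := by
  show a * sinv a * (a * sinv a) = a * sinv a
  rw [← mul_assoc, mul_sinv_mul]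

lemma idem_mul {e f : S} (he : idem e) (hf : idem f) : idem (e * f) := by
  show e * f * (e * f) = e * f
  calc e * f * (e * f) = e * (f * e) * f := by simp only [mul_assoc]
    _ = e * (e * f) * f := by rw [idem_comm' hf he]
    _ = (e * e) * (f * f) := by simp only [mul_assoc]
    _ = e * f := by rw [he, hf]

lemma eq_sinv_of_mul_mul {a x : S} (h1 : a * x * a = a) (h2 : x * a * x = x) : x = sinv a := by
  have hxa : idem (x * a) := by
    show x * a * (x * a) = x * a
    rw [← mul_assoc, h2]
  have hax : idem (a * x) := by
    show a * x * (a * x) = a * x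
    rw [← mul_assoc, h1]
  have hx : x = sinv a * a * x := by
    calc x = x * a * x := h2.symm
      _ = x * (a * sinv a * a) * x := by rw [mul_sinv_mul]
      _ = ((x * a) * (sinv a * a)) * x := by simp only [mul_assoc]
      _ = ((sinv a * a) * (x * a)) * x := by rw [idem_comm' hxa (idem_sinv_mul_self a)]
      _ = sinv a * a * (x * a * x) := by simp only [mul_assoc]
      _ = sinv a * a * x := by rw [h2]
  have hsinv : sinv a = sinv a * a * x := by
    calc sinv a = sinv a * a * sinv a := (sinv_mul_sinv a).symm
      _ = sinv a * (a * x * a) * sinv a := by rw [h1]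
      _ = sinv a * ((a * x) * (a * sinv a)) := by simp only [mul_assoc]
      _ = sinv a * ((a * sinv a) * (a * x)) := by rw [idem_comm' hax (idem_mul_sinv_self a)]
      _ = (sinv a * a * sinv a) * (a * x) := by simp only [mul_assoc]
      _ = sinv a * a * x := by rw [sinv_mul_sinv, mul_assoc]
  exact hx.trans hsinv.symm

lemma sinv_sinv (a : S) : sinv (sinv a) = a :=
  (eq_sinv_of_mul_mul (sinv_mul_sinv a) (mul_sinv_mul a)).symm

lemma sinv_of_idem {e : S} (he : idem e) : sinv e = e := by
  have h : e * e * e = e := by rw [he, he]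
  exact (eq_sinv_of_mul_mul h h).symm

lemma sinv_mul (a b : S) : sinv (a * b) = sinv b * sinv a := by
  refine (eq_sinv_of_mul_mul ?_ ?_).symm
  · calc (a * b) * (sinv b * sinv a) * (a * b)
        = a * ((b * sinv b) * (sinv a * a)) * b := by simp only [mul_assoc]
      _ = a * ((sinv a * a) * (b * sinv b)) * b := by
          rw [idem_comm' (idem_mul_sinv_self b) (idem_sinv_mul_self a)]
      _ = (a * sinv a * a) * (b * sinv b * b) := by simp only [mul_assoc]
      _ = a * b := by rw [mul_sinv_mul, mul_sinv_mul]
  · calc (sinv b * sinv a) * (a * b) * (sinv b * sinv a)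
        = sinv b * ((sinv a * a) * (b * sinv b)) * sinv a := by simp only [mul_assoc]
      _ = sinv b * ((b * sinv b) * (sinv a * a)) * sinv a := by
          rw [idem_comm' (idem_sinv_mul_self a) (idem_mul_sinv_self b)]
      _ = (sinv b * b * sinv b) * (sinv a * a * sinv a) := by simp only [mul_assoc]
      _ = sinv b * sinv a := by rw [sinv_mul_sinv, sinv_mul_sinv]

lemma idem_sinv_mul_mul {e : S} (he : idem e) (d : S) : idem (sinv d * e * d) := by
  show (sinv d * e * d) * (sinv d * e * d) = sinv d * e * d
  calc (sinv d * e * d) * (sinv d * e * d)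
      = sinv d * (e * (d * sinv d)) * (e * d) := by simp only [mul_assoc]
    _ = sinv d * ((d * sinv d) * e) * (e * d) := by rw [idem_comm' he (idem_mul_sinv_self d)]
    _ = (sinv d * d * sinv d) * ((e * e) * d) := by simp only [mul_assoc]
    _ = sinv d * e * d := by rw [sinv_mul_sinv, he, mul_assoc]

lemma mul_sinv_mul_mul {e : S} (he : idem e) (d : S) : d * (sinv d * e * d) = e * d := by
  calc d * (sinv d * e * d) = (d * sinv d) * e * d := by simp only [mul_assoc]
    _ = e * (d * sinv d) * d := by rw [idem_comm' (idem_mul_sinv_self d) he]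
    _ = e * (d * sinv d * d) := by simp only [mul_assoc]
    _ = e * d := by rw [mul_sinv_mul]

lemma nle_refl (a : S) : nle a a :=
  ⟨sinv a * a, idem_sinv_mul_self a, by rw [← mul_assoc, mul_sinv_mul]⟩

lemma nle_trans {a b c : S} (h1 : nle a b) (h2 : nle b c) : nle a c := by
  obtain ⟨e, he, rfl⟩ := h1
  obtain ⟨f, hf, rfl⟩ := h2
  exact ⟨f * e, idem_mul hf he, by rw [mul_assoc]⟩

lemma mul_nle_self_of_idem {e : S} (he : idem e) (x : S) : nle (e * x) x :=
  ⟨sinv x * e * x, idem_sinv_mul_mul he x, (mul_sinv_mul_mul he x).symm⟩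

lemma mul_nle_mul {a b c d : S} (h1 : nle a b) (h2 : nle c d) : nle (a * c) (b * d) := by
  obtain ⟨e, he, rfl⟩ := h1
  obtain ⟨f, hf, rfl⟩ := h2
  refine ⟨(sinv d * e * d) * f, idem_mul (idem_sinv_mul_mul he d) hf, ?_⟩
  calc (b * e) * (d * f) = b * (e * d) * f := by simp only [mul_assoc]
    _ = b * (d * (sinv d * e * d)) * f := by rw [mul_sinv_mul_mul he d]
    _ = (b * d) * ((sinv d * e * d) * f) := by simp only [mul_assoc]

lemma sinv_nle_sinv {a b : S} (h : nle a b) : nle (sinv a) (sinv b) := by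
  obtain ⟨e, he, rfl⟩ := h
  rw [sinv_mul, sinv_of_idem he]
  exact mul_nle_self_of_idem he (sinv b)

lemma sinv_mul_self_nle {a b : S} (h : nle a b) : nle (sinv a * a) (sinv b * b) :=
  mul_nle_mul (sinv_nle_sinv h) h

lemma sinv_nle_sinv_iff {a b : S} : nle (sinv a) (sinv b) ↔ nle a b :=
  ⟨fun h => by simpa only [sinv_sinv] using sinv_nle_sinv h, sinv_nle_sinv⟩

lemma idem_of_nle {x e : S} (h : nle x e) (he : idem e) : idem x := by
  obtain ⟨f, hf, rfl⟩ := h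
  exact idem_mul he hf

lemma eq_mul_sinv_mul_self_of_nle {a b : S} (h : nle a b) : a = b * (sinv a * a) := by
  obtain ⟨e, he, rfl⟩ := h
  rw [sinv_mul, sinv_of_idem he]
  calc b * e = b * ((sinv b * b) * (e * e)) := by rw [he, ← mul_assoc, ← mul_assoc, mul_sinv_mul]
    _ = b * (e * (sinv b * b) * e) := by
        rw [← mul_assoc (sinv b * b), idem_comm' (idem_sinv_mul_self b) he]
    _ = b * (e * sinv b * (b * e)) := by simp only [mul_assoc]

lemma sinv_mul_eq_sinv_mul_self_of_nle {a b : S} (h : nle a b) : sinv a * b = sinv a * a := by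
  obtain ⟨e, he, rfl⟩ := h
  rw [sinv_mul, sinv_of_idem he]
  calc e * sinv b * b = e * e * (sinv b * b) := by rw [he, mul_assoc]
    _ = e * ((sinv b * b) * e) := by rw [mul_assoc, idem_comm' he (idem_sinv_mul_self b)]
    _ = e * sinv b * (b * e) := by simp only [mul_assoc]

lemma nle_of_sinv_mul_self_nle {a d j : S} (ha : nle a j) (hd : nle d j)
    (h : nle (sinv d * d) (sinv a * a)) : nle d a := by
  rw [eq_mul_sinv_mul_self_of_nle hd, eq_mul_sinv_mul_self_of_nle ha]
  exact mul_nle_mul (nle_refl j) h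

lemma isJoin_sinv {a b j : S} (h : isJoin a b j) : isJoin (sinv a) (sinv b) (sinv j) := by
  refine ⟨sinv_nle_sinv h.1, sinv_nle_sinv h.2.1, fun c hac hbc => ?_⟩
  rw [← sinv_sinv c] at hac hbc ⊢
  rw [sinv_nle_sinv_iff] at hac hbc ⊢
  exact h.2.2 _ hac hbc

lemma compatible_of_nle {a b j : S} (ha : nle a j) (hb : nle b j) : compatible a b := by
  refine ⟨idem_of_nle (nle_trans (mul_nle_mul (sinv_nle_sinv ha) hb) ?_) (idem_sinv_mul_self j),
    idem_of_nle (mul_nle_mul ha (sinv_nle_sinv hb)) (idem_mul_sinv_self j)⟩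
  rw [sinv_mul_eq_sinv_mul_self_of_nle (nle_refl j)]
  exact nle_refl _

end InverseSemigroup

section WithZero
variable [InverseSemigroupWithZero S]

lemma eq_zero_of_nle_zero {x : S} (h : nle x 0) : x = 0 := by
  obtain ⟨e, -, rfl⟩ := h
  exact InverseSemigroupWithZero.zmul e

lemma mem_dClosure_of_mul_mem {F : Set S} {c x : S} (hc : c ∈ F) (hcx : c * x ∈ F) :
    x ∈ dClosure F := by
  refine ⟨c, hc, c * x, hcx, ?_⟩
  rw [← mul_assoc]
  exact mul_nle_self_of_idem (idem_sinv_mul_self c) x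

namespace IsFilter

variable {F : Set S}

lemma mem_dClosure_iff (hF : IsFilter F) {x : S} :
    x ∈ dClosure F ↔ ∃ c ∈ F, nle (sinv c * c) x := by
  constructor
  · rintro ⟨p, hp, q, hq, hx⟩
    obtain ⟨c, hc, hcp, hcq⟩ := hF.2.1 p hp q hq
    exact ⟨c, hc, nle_trans (mul_nle_mul (sinv_nle_sinv hcp) hcq) hx⟩
  · rintro ⟨c, hc, hx⟩
    exact ⟨c, hc, c, hc, hx⟩

lemma isFilter_dClosure (hF : IsFilter F) : IsFilter (dClosure F) := by
  obtain ⟨a, ha⟩ := hF.1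
  refine ⟨⟨sinv a * a, a, ha, a, ha, nle_refl _⟩, ?_, ?_⟩
  · intro x hx y hy
    obtain ⟨c₁, hc₁, hx⟩ := hF.mem_dClosure_iff.1 hx
    obtain ⟨c₂, hc₂, hy⟩ := hF.mem_dClosure_iff.1 hy
    obtain ⟨c, hc, hcc₁, hcc₂⟩ := hF.2.1 c₁ hc₁ c₂ hc₂
    exact ⟨sinv c * c, hF.mem_dClosure_iff.2 ⟨c, hc, nle_refl _⟩,
      nle_trans (sinv_mul_self_nle hcc₁) hx, nle_trans (sinv_mul_self_nle hcc₂) hy⟩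
  · rintro x ⟨p, hp, q, hq, hx⟩ y hxy
    exact ⟨p, hp, q, hq, nle_trans hx hxy⟩

lemma zero_mem_dClosure_iff (hF : IsFilter F) : (0 : S) ∈ dClosure F ↔ (0 : S) ∈ F := by
  constructor
  · intro h
    obtain ⟨c, hc, hc0⟩ := hF.mem_dClosure_iff.1 h
    have hc_eq : c = c * (sinv c * c) := eq_mul_sinv_mul_self_of_nle (nle_refl c)
    rw [eq_zero_of_nle_zero hc0, InverseSemigroupWithZero.mulz] at hc_eq
    rwa [hc_eq] at hc
  · intro h
    refine ⟨0, h, 0, h, ?_⟩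
    rw [InverseSemigroupWithZero.mulz]
    exact nle_refl 0

lemma mul_mem_of_sinv_mul_self_nle (hF : IsFilter F) {c x : S} (hc : c ∈ F)
    (hx : nle (sinv c * c) x) : c * x ∈ F := by
  have hcx : nle (c * (sinv c * c)) (c * x) := mul_nle_mul (nle_refl c) hx
  rw [← eq_mul_sinv_mul_self_of_nle (nle_refl c)] at hcx
  exact hF.2.2 c hc _ hcx

lemma mem_of_sinv_mul_self_mem_dClosure (hF : IsFilter F) {a j : S} (hj : j ∈ F) (ha : nle a j)
    (haa : sinv a * a ∈ dClosure F) : a ∈ F := by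
  obtain ⟨c, hc, hca⟩ := hF.mem_dClosure_iff.1 haa
  obtain ⟨d, hd, hdc, hdj⟩ := hF.2.1 c hc j hj
  exact hF.2.2 d hd a (nle_of_sinv_mul_self_nle ha hdj (nle_trans (sinv_mul_self_nle hdc) hca))

end IsFilter

end WithZero

section Distributive
variable [DistributiveInverseSemigroup S]

lemma isJoin_sinv_mul_self {a b j : S} (h : isJoin a b j) :
    isJoin (sinv a * a) (sinv b * b) (sinv j * j) := by
  have hinv := isJoin_sinv h
  have hdistrib := DistributiveInverseSemigroup.mul_distrib_right _ _ _ j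
    (compatible_of_nle hinv.1 hinv.2.1) hinv
  rwa [sinv_mul_eq_sinv_mul_self_of_nle h.1, sinv_mul_eq_sinv_mul_self_of_nle h.2.1] at hdistrib

lemma IsPrimeFilter.isPrimeFilter_dClosure {F : Set S} (hF : IsPrimeFilter F) :
    IsPrimeFilter (dClosure F) := by
  have hFilter : IsFilter F := hF.1.1
  refine ⟨⟨hFilter.isFilter_dClosure, hFilter.zero_mem_dClosure_iff.not.2 hF.1.2⟩,
    fun a b x hx hxd => ?_⟩
  obtain ⟨c, hc, hcx⟩ := hFilter.mem_dClosure_iff.1 hxd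
  have hjoin := DistributiveInverseSemigroup.mul_distrib_left a b x c
    (compatible_of_nle hx.1 hx.2.1) hx
  exact (hF.2 _ _ _ hjoin (hFilter.mul_mem_of_sinv_mul_self_nle hc hcx)).imp
    (mem_dClosure_of_mul_mem hc) (mem_dClosure_of_mul_mem hc)

lemma IsFilter.isPrimeFilter_of_isPrimeFilter_dClosure {F : Set S} (hF : IsFilter F)
    (hd : IsPrimeFilter (dClosure F)) : IsPrimeFilter F := by
  refine ⟨⟨hF, hF.zero_mem_dClosure_iff.not.1 hd.1.2⟩, fun a b j hj hjF => ?_⟩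
  have hjj : sinv j * j ∈ dClosure F := hF.mem_dClosure_iff.2 ⟨j, hjF, nle_refl _⟩
  exact (hd.2 _ _ _ (isJoin_sinv_mul_self hj) hjj).imp
    (hF.mem_of_sinv_mul_self_mem_dClosure hjF hj.1)
    (hF.mem_of_sinv_mul_self_mem_dClosure hjF hj.2.1)

end Distributive

theorem stmt5_general {S : Type*} [DistributiveInverseSemigroup S] (F : Set S)
    (hF : IsFilter F) :
    IsPrimeFilter F ↔ IsPrimeFilter (dClosure F) :=
  ⟨IsPrimeFilter.isPrimeFilter_dClosure, hF.isPrimeFilter_of_isPrimeFilter_dClosure⟩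

/-- A filter `F` in a distributive inverse semigroup is a prime filter
iff `d(F) = (F⁻¹F)↑` is a prime filter. -/
theorem stmt5 {S : Type*} [DistributiveInverseSemigroup S] (F : Set S)
    (hF : IsFilter F) (hproper : (0 : S) ∉ F) :
    IsPrimeFilter F ↔ IsPrimeFilter (dClosure F) :=
  stmt5_general F hF

end InvPaper
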